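/- Let f : ℝ^n → ℝ be lower semicontinuous and ρ-weakly convex with the implicit bounded subgradient property with constant L̂_f > 0, let γ ∈ (0, 1/ρ), η ∈ (0, 2), and fix an integer K ≥ 1. Assume b lies in the column space of A and σ̃ > 0 satisfies ‖Aᵀv‖² ≥ σ̃‖v‖² for every v in the column space of A; set c_{γ,A} := γ²σ̃. Let (x^k, z^k, λ^k) be MEAL iterates with penalty parameters β_k > 0 chosen so that α_k := (β_k + β_{k+1} + γη(1 − η/2))/(2c_{γ,A}β_k²) = α*/K for every k, where 0 < α* ≤ min{ (1 − ργ)/(6γ), (1/(12γ))(2/η − 1) }. Suppose Ẽ^k := P_{β_k}(x^k, z^k, λ^k) + 3α_k‖z^k − z^{k−1}‖² ≥ E* for all 1 ≤ k ≤ K + 1. Then min_{1≤t≤K} Φ_t ≤ √( (Ẽ¹ − E* + 12γ²L̂_f²α*) / ((γη/2)(1 − η/2)) ) / √K, where Φ_t := √((ηγ)⁻²‖z^t − z^{t+1}‖² + β_t⁻²‖λ^{t+1} − λ^t‖²). -/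

import Mathlib

open scoped RealInnerProductSpace

/-- `P_β(x, z, λ) = f(x) + ⟨λ, Ax − b⟩ + (β/2)‖Ax − b‖² + (1/(2γ))‖x − z‖²`. -/
noncomputable def Pfun {n m : ℕ} (f : EuclideanSpace ℝ (Fin n) → ℝ)
    (A : Matrix (Fin m) (Fin n) ℝ) (b : EuclideanSpace ℝ (Fin m)) (γ β : ℝ)
    (x z : EuclideanSpace ℝ (Fin n)) (lam : EuclideanSpace ℝ (Fin m)) : ℝ :=
  f x + ⟪lam, Matrix.toEuclideanLin A x - b⟫
    + β / 2 * ‖Matrix.toEuclideanLin A x - b‖ ^ 2 + 1 / (2 * γ) * ‖x - z‖ ^ 2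

/-!
A Lyapunov argument for `Ẽᵏ`. The map `P_β(·, z, λ)` is `(1/γ - ρ)`-strongly convex, so the
`x`-update decreases `P` by `(1/γ - ρ)/2 ‖Δx‖²`, while the `z`- and `λ`-updates change `P` by an
explicit amount. Since `Δλ = β (Ax - b)` lies in the range of `A`, the prox optimality condition
`γ Aᵀλᵏ⁺¹ = zᵏ - xᵏ⁺¹ - γ ∇M_{γ,f}(wᵏ)` and the bound on `∇M_{γ,f}` give
`γ²σ̃ ‖Δλ‖² ≤ 3‖Δz‖² + 3‖Δx‖² + 12γ²L̂²`. The choice of `αₖ` is exactly what makes these combine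
into `Ẽᵏ⁺¹ + (γη/2)(1 - η/2) Φₖ² ≤ Ẽᵏ + 12γ²L̂² α*/K`; telescoping over `k ≤ K` and using
`Ẽᴷ⁺¹ ≥ E*` bounds `∑ Φₜ²`, hence the smallest `Φₜ`.
-/

open Set Filter Topology

local notation "𝔼" n => EuclideanSpace ℝ (Fin n)

theorem StrongConvexOn.add_sq_norm_sub_le_of_isMinOn {E : Type*} [NormedAddCommGroup E]
    [NormedSpace ℝ E] {g : E → ℝ} {m : ℝ} {x₀ : E} (hg : StrongConvexOn univ m g)
    (hmin : IsMinOn g univ x₀) (x : E) :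
    g x₀ + m / 2 * ‖x - x₀‖ ^ 2 ≤ g x := by
  set c := m / 2 * ‖x - x₀‖ ^ 2
  have hshrink : ∀ t ∈ Ioo (0 : ℝ) 1, g x₀ + (1 - t) * c ≤ g x := by
    rintro t ⟨ht0, ht1⟩
    have hconv := hg.2 (mem_univ x) (mem_univ x₀) ht0.le (sub_nonneg.2 ht1.le) (by ring)
    have hle := isMinOn_univ_iff.1 hmin (t • x + (1 - t) • x₀)
    simp only [smul_eq_mul] at hconv
    refine le_of_mul_le_mul_left ?_ ht0
    linear_combination hle + hconv
  have hlim : Tendsto (fun t : ℝ => g x₀ + (1 - t) * c) (𝓝[>] 0) (𝓝 (g x₀ + c)) := by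
    have := (continuous_const.add ((continuous_const.sub continuous_id).mul
      continuous_const)).tendsto (0 : ℝ) (f := fun t : ℝ => g x₀ + (1 - t) * c)
    simpa using this.mono_left nhdsWithin_le_nhds
  exact le_of_tendsto hlim (by filter_upwards [Ioo_mem_nhdsGT one_pos] using hshrink)

theorem sq_norm_add_add_le {E : Type*} [SeminormedAddCommGroup E] (u v w : E) :
    ‖u + v + w‖ ^ 2 ≤ 3 * (‖u‖ ^ 2 + ‖v‖ ^ 2 + ‖w‖ ^ 2) := by
  have h := pow_le_pow_left₀ (norm_nonneg _) (norm_add₃_le (a := u) (b := v) (c := w)) 2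
  nlinarith [sq_nonneg (‖u‖ - ‖v‖), sq_nonneg (‖v‖ - ‖w‖), sq_nonneg (‖u‖ - ‖w‖)]

theorem sq_norm_smul_map_sub_le_of_prox {E F : Type*} [NormedAddCommGroup E] [NormedSpace ℝ E]
    [AddCommGroup F] [Module ℝ F] (T : F →ₗ[ℝ] E) (prox : E → E) {γ L : ℝ} (hγ : 0 < γ)
    (hbnd : ∀ w, ‖γ⁻¹ • (w - prox w)‖ ≤ L) {z₀ z₁ x₁ x₂ : E} {lam₁ lam₂ : F}
    (hx₁ : x₁ = prox (z₀ - γ • T lam₁)) (hx₂ : x₂ = prox (z₁ - γ • T lam₂)) :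
    ‖γ • T (lam₂ - lam₁)‖ ^ 2 ≤ 3 * ‖z₁ - z₀‖ ^ 2 + 3 * ‖x₂ - x₁‖ ^ 2 + 12 * γ ^ 2 * L ^ 2 := by
  have hres : ∀ w, ‖w - prox w‖ ≤ γ * L := fun w => by
    have := hbnd w
    rwa [norm_smul, Real.norm_of_nonneg (inv_nonneg.2 hγ.le), inv_mul_le_iff₀ hγ] at this
  set w₁ := z₀ - γ • T lam₁
  set w₂ := z₁ - γ • T lam₂
  have hsplit : γ • T (lam₂ - lam₁)
      = (z₁ - z₀) + (x₁ - x₂) + ((w₁ - prox w₁) - (w₂ - prox w₂)) := by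
    rw [hx₁, hx₂, map_sub]; simp only [w₁, w₂]; module
  have hres₂ : ‖(w₁ - prox w₁) - (w₂ - prox w₂)‖ ^ 2 ≤ (2 * (γ * L)) ^ 2 :=
    pow_le_pow_left₀ (norm_nonneg _)
      ((norm_sub_le _ _).trans (by linarith [hres w₁, hres w₂])) 2
  have htri := sq_norm_add_add_le (z₁ - z₀) (x₁ - x₂) ((w₁ - prox w₁) - (w₂ - prox w₂))
  rw [norm_sub_rev x₁ x₂] at htri
  rw [hsplit]
  linarith

theorem add_sum_Icc_le_of_forall_add_le {E d : ℕ → ℝ} {c : ℝ}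
    (h : ∀ k, 1 ≤ k → E (k + 1) + d k ≤ E k + c) (N : ℕ) :
    E (N + 1) + ∑ k ∈ Finset.Icc 1 N, d k ≤ E 1 + N * c := by
  induction N with
  | zero => simp
  | succ N ih =>
    rw [Finset.sum_Icc_succ_top (by omega), Nat.cast_succ]
    linarith [h (N + 1) (by omega)]

theorem sInf_sqrt_image_le_of_sum_le {ι : Type*} {s : Finset ι} (hs : s.Nonempty) {φ : ι → ℝ}
    {C : ℝ} (hsum : ∑ i ∈ s, φ i ≤ C) :
    sInf ((fun i => √(φ i)) '' s) ≤ √C / √(s.card : ℝ) := by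
  obtain ⟨i, hi, hmin⟩ := s.exists_min_image φ hs
  have hcard : (s.card : ℝ) * φ i ≤ C := by
    simpa using (s.card_nsmul_le_sum φ (φ i) hmin).trans hsum
  calc sInf ((fun i => √(φ i)) '' s) ≤ √(φ i) :=
        csInf_le ⟨0, by rintro _ ⟨_, _, rfl⟩; positivity⟩ ⟨i, hi, rfl⟩
    _ ≤ √(C / s.card) := Real.sqrt_le_sqrt <| by
        rw [le_div_iff₀ (by simpa using hs.card_pos)]; linarith
    _ = √C / √(s.card : ℝ) := Real.sqrt_div' C (Nat.cast_nonneg _)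

section MEAL

variable {n m : ℕ}

theorem strongConvexOn_pfun {f : (𝔼 n) → ℝ} {ρ : ℝ}
    (hwc : ConvexOn ℝ univ fun x => f x + ρ / 2 * ‖x‖ ^ 2) (A : Matrix (Fin m) (Fin n) ℝ)
    (b : 𝔼 m) (γ : ℝ) {β : ℝ} (hβ : 0 ≤ β) (z : 𝔼 n) (lam : 𝔼 m) :
    StrongConvexOn univ (1 / γ - ρ) fun x => Pfun f A b γ β x z lam := by
  set T := Matrix.toEuclideanLin A
  have hsq : ConvexOn ℝ univ fun x => ‖T x - b‖ ^ 2 :=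
    (((convexOn_univ_dist b).pow (fun _ _ => dist_nonneg) 2).comp_linearMap T).congr
      fun x _ => by simp [dist_eq_norm]
  have hlin : ConvexOn ℝ univ
      (innerₗ (𝔼 m) lam ∘ₗ T - γ⁻¹ • innerₗ (𝔼 n) z) := LinearMap.convexOn _ convex_univ
  rw [strongConvexOn_iff_convex]
  -- `‖x - z‖² / (2γ) - ‖x‖² / (2γ)` is affine in `x`, so only `f + ρ/2 ‖·‖²` and the
  -- penalty term are left to be convex.
  refine ((hwc.add (hsq.smul (by positivity : 0 ≤ β / 2))).add
    (hlin.add_const (-⟪lam, b⟫ + 1 / (2 * γ) * ‖z‖ ^ 2))).congr fun x _ => ?_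
  simp only [Pfun, Pi.add_apply, smul_eq_mul, LinearMap.sub_apply, LinearMap.comp_apply,
    LinearMap.smul_apply, innerₗ_apply_apply, inner_sub_right, norm_sub_sq_real, T]
  rw [real_inner_comm x z]
  ring

theorem pfun_update_eq (f : (𝔼 n) → ℝ) (A : Matrix (Fin m) (Fin n) ℝ) (b : 𝔼 m) (γ η : ℝ)
    {β β' : ℝ} {x z z' : 𝔼 n} {lam lam' : 𝔼 m}
    (hz : z' = z - η • (z - x)) (hlam : lam' = lam + β • (Matrix.toEuclideanLin A x - b)) :
    Pfun f A b γ β' x z' lam'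
      = Pfun f A b γ β x z lam + (β + β') / 2 * ‖Matrix.toEuclideanLin A x - b‖ ^ 2
        - η * (2 - η) / (2 * γ) * ‖x - z‖ ^ 2 := by
  have hxz : x - z' = (1 - η) • (x - z) := by rw [hz]; module
  simp only [Pfun, hxz, hlam, norm_smul, mul_pow, Real.norm_eq_abs, sq_abs, inner_add_left,
    real_inner_smul_left, real_inner_self_eq_norm_sq]
  ring

/-- `mealEnergy … k` is the paper's `Ẽᵏ` (for `k ≥ 1`), and `mealResidualSq … t` is `Φₜ²`. -/
noncomputable def mealEnergy (f : (𝔼 n) → ℝ) (A : Matrix (Fin m) (Fin n) ℝ) (b : 𝔼 m)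
    (γ α : ℝ) (β : ℕ → ℝ) (x z : ℕ → 𝔼 n) (lam : ℕ → 𝔼 m) (k : ℕ) : ℝ :=
  Pfun f A b γ (β k) (x k) (z k) (lam k) + 3 * α * ‖z k - z (k - 1)‖ ^ 2

noncomputable def mealResidualSq (γ η : ℝ) (β : ℕ → ℝ) (z : ℕ → 𝔼 n) (lam : ℕ → 𝔼 m)
    (t : ℕ) : ℝ :=
  ((η * γ) ^ 2)⁻¹ * ‖z t - z (t + 1)‖ ^ 2 + (β t ^ 2)⁻¹ * ‖lam (t + 1) - lam t‖ ^ 2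

theorem stepsize_bounds {ρ γ η α : ℝ} (hγ : 0 < γ) (hη : 0 < η)
    (hα : α ≤ min ((1 - ρ * γ) / (6 * γ)) (1 / (12 * γ) * (2 / η - 1))) :
    3 * α ≤ (1 / γ - ρ) / 2 ∧ 3 * α * η ≤ (2 - η) / (4 * γ) := by
  constructor
  · have := hα.trans (min_le_left _ _)
    rw [show (1 - ρ * γ) / (6 * γ) = (1 / γ - ρ) / 2 / 3 by field_simp; ring] at this
    linarith
  · have := mul_le_mul_of_nonneg_right (hα.trans (min_le_right _ _)) hη.le
    rw [show 1 / (12 * γ) * (2 / η - 1) * η = (2 - η) / (4 * γ) / 3 by field_simp; ring] at this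
    linarith

variable {f : (𝔼 n) → ℝ} {A : Matrix (Fin m) (Fin n) ℝ} {b : 𝔼 m} {prox : (𝔼 n) → 𝔼 n}
  {ρ γ η σ L α : ℝ} {β : ℕ → ℝ} {x z : ℕ → 𝔼 n} {lam : ℕ → 𝔼 m}

theorem sq_norm_lam_sub_le (hγ : 0 < γ) (hbnd : ∀ w, ‖γ⁻¹ • (w - prox w)‖ ≤ L)
    (hb : b ∈ LinearMap.range (Matrix.toEuclideanLin A))
    (hσA : ∀ v ∈ LinearMap.range (Matrix.toEuclideanLin A),
      σ * ‖v‖ ^ 2 ≤ ‖Matrix.toEuclideanLin A.transpose v‖ ^ 2)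
    (hlam : ∀ k, lam (k + 1) = lam k + β k • (Matrix.toEuclideanLin A (x (k + 1)) - b))
    (hprox : ∀ k, x (k + 1) = prox (z k - γ • Matrix.toEuclideanLin A.transpose (lam (k + 1))))
    (k : ℕ) :
    γ ^ 2 * σ * ‖lam (k + 2) - lam (k + 1)‖ ^ 2
      ≤ 3 * ‖z (k + 1) - z k‖ ^ 2 + 3 * ‖x (k + 2) - x (k + 1)‖ ^ 2 + 12 * γ ^ 2 * L ^ 2 := by
  have hrange : lam (k + 2) - lam (k + 1) ∈ LinearMap.range (Matrix.toEuclideanLin A) := by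
    rw [hlam (k + 1), add_sub_cancel_left]
    exact Submodule.smul_mem _ _ (Submodule.sub_mem _ (LinearMap.mem_range_self _ _) hb)
  have hres := sq_norm_smul_map_sub_le_of_prox (Matrix.toEuclideanLin A.transpose) prox hγ hbnd
    (hprox k) (hprox (k + 1))
  rw [norm_smul, mul_pow, Real.norm_eq_abs, sq_abs] at hres
  calc γ ^ 2 * σ * ‖lam (k + 2) - lam (k + 1)‖ ^ 2
      = γ ^ 2 * (σ * ‖lam (k + 2) - lam (k + 1)‖ ^ 2) := by ring
    _ ≤ γ ^ 2 * ‖Matrix.toEuclideanLin A.transpose (lam (k + 2) - lam (k + 1))‖ ^ 2 :=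
      mul_le_mul_of_nonneg_left (hσA _ hrange) (sq_nonneg γ)
    _ ≤ _ := hres

theorem mealEnergy_add_le (hwc : ConvexOn ℝ univ fun x => f x + ρ / 2 * ‖x‖ ^ 2)
    (hγ : 0 < γ) (hη : 0 < η) (hσ : 0 < σ) (hβ : ∀ k, 0 < β k)
    (hbnd : ∀ w, ‖γ⁻¹ • (w - prox w)‖ ≤ L)
    (hb : b ∈ LinearMap.range (Matrix.toEuclideanLin A))
    (hσA : ∀ v ∈ LinearMap.range (Matrix.toEuclideanLin A),
      σ * ‖v‖ ^ 2 ≤ ‖Matrix.toEuclideanLin A.transpose v‖ ^ 2)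
    (hα : ∀ k, (β k + β (k + 1) + γ * η * (1 - η / 2)) / (2 * (γ ^ 2 * σ) * β k ^ 2) = α)
    (hα₀ : 0 ≤ α) (hαx : 3 * α ≤ (1 / γ - ρ) / 2) (hαz : 3 * α * η ≤ (2 - η) / (4 * γ))
    (hxmin : ∀ k x', Pfun f A b γ (β k) (x (k + 1)) (z k) (lam k)
        ≤ Pfun f A b γ (β k) x' (z k) (lam k))
    (hz : ∀ k, z (k + 1) = z k - η • (z k - x (k + 1)))
    (hlam : ∀ k, lam (k + 1) = lam k + β k • (Matrix.toEuclideanLin A (x (k + 1)) - b))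
    (hprox : ∀ k, x (k + 1) = prox (z k - γ • Matrix.toEuclideanLin A.transpose (lam (k + 1))))
    (k : ℕ) :
    mealEnergy f A b γ α β x z lam (k + 2)
        + γ * η / 2 * (1 - η / 2) * mealResidualSq γ η β z lam (k + 1)
      ≤ mealEnergy f A b γ α β x z lam (k + 1) + 12 * γ ^ 2 * L ^ 2 * α := by
  simp only [mealEnergy, mealResidualSq, Nat.add_sub_cancel]
  rw [show k + 2 - 1 = k + 1 from rfl, show k + 1 + 1 = k + 2 from rfl,
    norm_sub_rev (z (k + 2))]
  have hupdate := pfun_update_eq f A b γ η (β' := β (k + 2)) (hz (k + 1)) (hlam (k + 1))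
  have hgrowth := (strongConvexOn_pfun hwc A b γ (hβ (k + 1)).le (z (k + 1)) (lam (k + 1)))
    |>.add_sq_norm_sub_le_of_isMinOn (isMinOn_univ_iff.2 (hxmin (k + 1))) (x (k + 1))
  rw [show k + 1 + 1 = k + 2 from rfl] at hupdate hgrowth
  rw [norm_sub_rev (x (k + 1))] at hgrowth
  set r := ‖Matrix.toEuclideanLin A (x (k + 2)) - b‖ ^ 2
  set s := ‖x (k + 2) - z (k + 1)‖ ^ 2
  set dx := ‖x (k + 2) - x (k + 1)‖ ^ 2
  have hΔlam : ‖lam (k + 2) - lam (k + 1)‖ ^ 2 = β (k + 1) ^ 2 * r := by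
    rw [hlam (k + 1), add_sub_cancel_left, norm_smul, mul_pow, Real.norm_eq_abs, sq_abs]
  have hdual := sq_norm_lam_sub_le hγ hbnd hb hσA hlam hprox k
  rw [hΔlam] at hdual
  have hΔz : ‖z (k + 1) - z (k + 2)‖ ^ 2 = η ^ 2 * s := by
    rw [hz (k + 1), sub_sub_cancel, norm_smul, mul_pow, Real.norm_eq_abs, sq_abs, norm_sub_rev]
  have hα' : β (k + 1) + β (k + 2) + γ * η * (1 - η / 2)
      = α * (2 * (γ ^ 2 * σ) * β (k + 1) ^ 2) :=
    (div_eq_iff (by have := hβ (k + 1); positivity)).1 (hα (k + 1))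
  have hβ₁ : β (k + 1) ≠ 0 := (hβ (k + 1)).ne'
  rw [hΔz, hΔlam]
  have hresidual : γ * η / 2 * (1 - η / 2) * (((η * γ) ^ 2)⁻¹ * (η ^ 2 * s)
        + (β (k + 1) ^ 2)⁻¹ * (β (k + 1) ^ 2 * r))
      = η * (2 - η) / (4 * γ) * s + γ * η / 2 * (1 - η / 2) * r := by
    field_simp
    ring
  rw [hresidual]
  have hdual' := mul_le_mul_of_nonneg_left hdual hα₀
  have hxstep := mul_le_mul_of_nonneg_right hαx (sq_nonneg _ : 0 ≤ dx)
  have hzstep := mul_le_mul_of_nonneg_right hαz (mul_nonneg hη.le (sq_nonneg _ : 0 ≤ s))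
  linear_combination hupdate + r / 2 * hα' + hgrowth + hdual' + hxstep + hzstep

end MEAL

theorem stmt_12_general (n m : ℕ) (A : Matrix (Fin m) (Fin n) ℝ) (b : EuclideanSpace ℝ (Fin m))
    (f : EuclideanSpace ℝ (Fin n) → ℝ) (ρ γ η Lfhat σ αstar Estar : ℝ) (K : ℕ) (hK : 1 ≤ K)
    (hγ0 : 0 < γ) (hη0 : 0 < η) (hη2 : η < 2)
    (hσ : 0 < σ)
    (hwc : ConvexOn ℝ Set.univ fun x => f x + ρ / 2 * ‖x‖ ^ 2)
    (prox : EuclideanSpace ℝ (Fin n) → EuclideanSpace ℝ (Fin n))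
    (hbnd : ∀ w, ‖γ⁻¹ • (w - prox w)‖ ≤ Lfhat)
    (hb : b ∈ LinearMap.range (Matrix.toEuclideanLin A))
    (hσA : ∀ v ∈ LinearMap.range (Matrix.toEuclideanLin A),
      σ * ‖v‖ ^ 2 ≤ ‖Matrix.toEuclideanLin A.transpose v‖ ^ 2)
    (β : ℕ → ℝ) (hβ : ∀ k, 0 < β k)
    (hαk : ∀ k, (β k + β (k + 1) + γ * η * (1 - η / 2)) / (2 * (γ ^ 2 * σ) * β k ^ 2)
        = αstar / K)
    (hαstar0 : 0 < αstar)
    (hαstar : αstar ≤ min ((1 - ρ * γ) / (6 * γ)) (1 / (12 * γ) * (2 / η - 1)))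
    (x z : ℕ → EuclideanSpace ℝ (Fin n)) (lam : ℕ → EuclideanSpace ℝ (Fin m))
    (hxmin : ∀ k x', Pfun f A b γ (β k) (x (k + 1)) (z k) (lam k)
        ≤ Pfun f A b γ (β k) x' (z k) (lam k))
    (hz : ∀ k, z (k + 1) = z k - η • (z k - x (k + 1)))
    (hlam : ∀ k, lam (k + 1) = lam k + β k • (Matrix.toEuclideanLin A (x (k + 1)) - b))
    (hprox : ∀ k, x (k + 1)
        = prox (z k - γ • Matrix.toEuclideanLin A.transpose (lam (k + 1))))
    (hEt : ∀ k, 1 ≤ k → k ≤ K + 1 →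
      Estar ≤ Pfun f A b γ (β k) (x k) (z k) (lam k)
          + 3 * (αstar / K) * ‖z k - z (k - 1)‖ ^ 2) :
    sInf ((fun t => Real.sqrt (((η * γ) ^ 2)⁻¹ * ‖z t - z (t + 1)‖ ^ 2
          + (β t ^ 2)⁻¹ * ‖lam (t + 1) - lam t‖ ^ 2)) '' Set.Icc 1 K)
      ≤ Real.sqrt ((Pfun f A b γ (β 1) (x 1) (z 1) (lam 1)
            + 3 * (αstar / K) * ‖z 1 - z 0‖ ^ 2 - Estar
            + 12 * γ ^ 2 * Lfhat ^ 2 * αstar) / (γ * η / 2 * (1 - η / 2)))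
        / Real.sqrt K := by
  have hK₀ : (0 : ℝ) < K := Nat.cast_pos.2 hK
  obtain ⟨hαx, hαz⟩ := stepsize_bounds hγ0 hη0
    ((div_le_self hαstar0.le (Nat.one_le_cast.2 hK)).trans hαstar)
  have hc : 0 < γ * η / 2 * (1 - η / 2) := mul_pos (by positivity) (by linarith)
  have htel := add_sum_Icc_le_of_forall_add_le
    (E := mealEnergy f A b γ (αstar / K) β x z lam)
    (d := fun t => γ * η / 2 * (1 - η / 2) * mealResidualSq γ η β z lam t)
    (fun k hk => by
      obtain ⟨j, rfl⟩ := Nat.exists_eq_add_of_le' hk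
      exact mealEnergy_add_le hwc hγ0 hη0 hσ hβ hbnd hb hσA hαk (by positivity) hαx hαz
        hxmin hz hlam hprox j) K
  have hKα : (K : ℝ) * (12 * γ ^ 2 * Lfhat ^ 2 * (αstar / K))
      = 12 * γ ^ 2 * Lfhat ^ 2 * αstar := by
    field_simp
  rw [← Finset.mul_sum, hKα] at htel
  simp only [mealEnergy, Nat.sub_self] at htel
  have hsum : ∑ t ∈ Finset.Icc 1 K, mealResidualSq γ η β z lam t
      ≤ (Pfun f A b γ (β 1) (x 1) (z 1) (lam 1) + 3 * (αstar / K) * ‖z 1 - z 0‖ ^ 2 - Estar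
          + 12 * γ ^ 2 * Lfhat ^ 2 * αstar) / (γ * η / 2 * (1 - η / 2)) := by
    rw [le_div_iff₀' hc]
    linarith [hEt (K + 1) (by omega) le_rfl]
  have hmin := sInf_sqrt_image_le_of_sum_le (Finset.nonempty_Icc.2 hK) hsum
  rwa [Finset.coe_Icc, Nat.card_Icc, Nat.add_sub_cancel] at hmin

/-- Theorem 1(b): `O(1/√K)` bound for MEAL under the implicit bounded subgradient
assumption. -/
theorem stmt_12 (n m : ℕ) (A : Matrix (Fin m) (Fin n) ℝ) (b : EuclideanSpace ℝ (Fin m))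
    (f : EuclideanSpace ℝ (Fin n) → ℝ) (ρ γ η Lfhat σ αstar Estar : ℝ) (K : ℕ) (hK : 1 ≤ K)
    (hρ : 0 < ρ) (hγ0 : 0 < γ) (hγ : γ < 1 / ρ) (hη0 : 0 < η) (hη2 : η < 2)
    (hLf : 0 < Lfhat) (hσ : 0 < σ)
    (hlsc : LowerSemicontinuous f)
    (hwc : ConvexOn ℝ Set.univ fun x => f x + ρ / 2 * ‖x‖ ^ 2)
    (prox : EuclideanSpace ℝ (Fin n) → EuclideanSpace ℝ (Fin n))
    (hproxmin : ∀ w x, f (prox w) + 1 / (2 * γ) * ‖prox w - w‖ ^ 2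
        ≤ f x + 1 / (2 * γ) * ‖x - w‖ ^ 2)
    (hproxuniq : ∀ w x, (∀ y, f x + 1 / (2 * γ) * ‖x - w‖ ^ 2
        ≤ f y + 1 / (2 * γ) * ‖y - w‖ ^ 2) → x = prox w)
    (hbnd : ∀ w, ‖γ⁻¹ • (w - prox w)‖ ≤ Lfhat)
    (hb : b ∈ LinearMap.range (Matrix.toEuclideanLin A))
    (hσA : ∀ v ∈ LinearMap.range (Matrix.toEuclideanLin A),
      σ * ‖v‖ ^ 2 ≤ ‖Matrix.toEuclideanLin A.transpose v‖ ^ 2)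
    (β : ℕ → ℝ) (hβ : ∀ k, 0 < β k)
    (hαk : ∀ k, (β k + β (k + 1) + γ * η * (1 - η / 2)) / (2 * (γ ^ 2 * σ) * β k ^ 2)
        = αstar / K)
    (hαstar0 : 0 < αstar)
    (hαstar : αstar ≤ min ((1 - ρ * γ) / (6 * γ)) (1 / (12 * γ) * (2 / η - 1)))
    (x z : ℕ → EuclideanSpace ℝ (Fin n)) (lam : ℕ → EuclideanSpace ℝ (Fin m))
    (hxmin : ∀ k x', Pfun f A b γ (β k) (x (k + 1)) (z k) (lam k)
        ≤ Pfun f A b γ (β k) x' (z k) (lam k))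
    (hz : ∀ k, z (k + 1) = z k - η • (z k - x (k + 1)))
    (hlam : ∀ k, lam (k + 1) = lam k + β k • (Matrix.toEuclideanLin A (x (k + 1)) - b))
    (hprox : ∀ k, x (k + 1)
        = prox (z k - γ • Matrix.toEuclideanLin A.transpose (lam (k + 1))))
    (hEt : ∀ k, 1 ≤ k → k ≤ K + 1 →
      Estar ≤ Pfun f A b γ (β k) (x k) (z k) (lam k)
          + 3 * (αstar / K) * ‖z k - z (k - 1)‖ ^ 2) :
    sInf ((fun t => Real.sqrt (((η * γ) ^ 2)⁻¹ * ‖z t - z (t + 1)‖ ^ 2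
          + (β t ^ 2)⁻¹ * ‖lam (t + 1) - lam t‖ ^ 2)) '' Set.Icc 1 K)
      ≤ Real.sqrt ((Pfun f A b γ (β 1) (x 1) (z 1) (lam 1)
            + 3 * (αstar / K) * ‖z 1 - z 0‖ ^ 2 - Estar
            + 12 * γ ^ 2 * Lfhat ^ 2 * αstar) / (γ * η / 2 * (1 - η / 2)))
        / Real.sqrt K :=
  stmt_12_general n m A b f ρ γ η Lfhat σ αstar Estar K hK hγ0 hη0 hη2 hσ hwc prox hbnd hb hσA β hβ
    hαk hαstar0 hαstar x z lam hxmin hz hlam hprox hEt
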